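/- For every n ≥ 2, the 1 × n board R_{1,n} satisfies f(R_{1,n}) = ⌈n/3⌉ and d(R_{1,n}) = n − ⌈n/3⌉. -/

import Mathlib

/-- A cell of the square grid. -/
abbrev Cell : Type := ℤ × ℤ

/-- Two cells are adjacent iff they differ by 1 in exactly one coordinate. -/
def Adj (p q : Cell) : Prop := |p.1 - q.1| + |p.2 - q.2| = 1

/-- A board: a finite nonempty set of cells, each adjacent to another cell of the board. -/
def IsBoard (B : Set Cell) : Prop :=
  B.Finite ∧ B.Nonempty ∧ ∀ p ∈ B, ∃ q ∈ B, Adj p q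

/-- A domino of `B`: a two-element subset of `B` whose cells are adjacent. -/
def IsDomino (B : Set Cell) (e : Finset Cell) : Prop :=
  ∃ p q : Cell, p ∈ B ∧ q ∈ B ∧ Adj p q ∧ e = {p, q}

/-- A domino covering of `B`: a finite set of dominoes of `B` whose union is `B`. -/
def IsDominoCovering (B : Set Cell) (D : Finset (Finset Cell)) : Prop :=
  (∀ e ∈ D, IsDomino B e) ∧ (⋃ e ∈ D, (↑e : Set Cell)) = B

/-- A saturated domino covering: removing any domino leaves some cell uncovered. -/
def IsSaturatedCovering (B : Set Cell) (D : Finset (Finset Cell)) : Prop :=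
  IsDominoCovering B D ∧ ∀ e ∈ D, (⋃ e' ∈ D.erase e, (↑e' : Set Cell)) ⊂ B

/-- `dNum B` is the maximum number of dominoes in a saturated domino covering of `B`. -/
noncomputable def dNum (B : Set Cell) : ℕ :=
  sSup {k : ℕ | ∃ D : Finset (Finset Cell), IsSaturatedCovering B D ∧ D.card = k}

/-- The X-pentomino centered at `c`: the cell `c` together with its four adjacent cells. -/
def Xpent (c : Cell) : Set Cell :=
  {c, (c.1 + 1, c.2), (c.1 - 1, c.2), (c.1, c.2 + 1), (c.1, c.2 - 1)}

/-- A set of cells is connected under adjacency. -/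
def ConnectedUnderAdj (F : Set Cell) : Prop :=
  ∀ p ∈ F, ∀ q ∈ F, Relation.ReflTransGen (fun a b => a ∈ F ∧ b ∈ F ∧ Adj a b) p q

/-- A fragment: a connected subset of some X-pentomino with at least two cells. -/
def IsFragment (F : Set Cell) : Prop :=
  (∃ c : Cell, F ⊆ Xpent c) ∧ 2 ≤ F.ncard ∧ ConnectedUnderAdj F

/-- A fragment tiling of `B`: a partition of `B` into pairwise disjoint fragments. -/
def IsFragmentTiling (B : Set Cell) (T : Finset (Set Cell)) : Prop :=
  (∀ F ∈ T, IsFragment F) ∧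
  (∀ F ∈ T, ∀ G ∈ T, F ≠ G → Disjoint F G) ∧
  (⋃ F ∈ T, F) = B

/-- `fNum B` is the minimum number of fragments in a fragment tiling of `B`. -/
noncomputable def fNum (B : Set Cell) : ℕ :=
  sInf {k : ℕ | ∃ T : Finset (Set Cell), IsFragmentTiling B T ∧ T.card = k}

/-- `xNum B` is the minimum number of X-pentominoes (centered anywhere, allowed to
overlap and to extend outside `B`) whose union covers `B`. -/
noncomputable def xNum (B : Set Cell) : ℕ :=
  sInf {k : ℕ | ∃ C : Finset Cell, B ⊆ (⋃ c ∈ C, Xpent c) ∧ C.card = k}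

/-- The `m × n` board `{0, …, m-1} × {0, …, n-1}`. -/
def Rect (m n : ℕ) : Set Cell := {p : Cell | 0 ≤ p.1 ∧ p.1 < m ∧ 0 ≤ p.2 ∧ p.2 < n}

/-!
In one row a fragment has at most three cells, so a fragment tiling of `R_{1,n}` has at least
`⌈n/3⌉` pieces, and cutting the row into `⌈n/3⌉` blocks of lengths `2` and `3` attains this.
In a saturated covering every domino owns a cell covered by no other domino, and in one row
every cell lies in at most two dominoes; double counting cell–domino incidences gives
`2|D| ≤ |D| + 2(n - |D|)`, i.e. `|D| ≤ ⌊2n/3⌋ = n - ⌈n/3⌉`. The same blocks attain this bound,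
carrying one domino on a block of length `2` and two overlapping ones on a block of length `3`.
-/

theorem adj_comm {p q : Cell} : Adj p q ↔ Adj q p := by
  simp only [Adj, abs_sub_comm]

noncomputable def row (a b : ℤ) : Finset Cell := {0} ×ˢ Finset.Ico a b

theorem mem_row {a b : ℤ} {p : Cell} : p ∈ row a b ↔ p.1 = 0 ∧ a ≤ p.2 ∧ p.2 < b := by
  simp only [row, Finset.mem_product, Finset.mem_singleton, Finset.mem_Ico]

theorem card_row (a b : ℤ) : (row a b).card = (b - a).toNat := by
  simp [row]

theorem rect_one_eq_row (n : ℕ) : Rect 1 n = ↑(row 0 n) := by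
  ext p
  simp only [Rect, Set.mem_ofPred_eq, Finset.mem_coe, mem_row]
  omega

theorem row_union {a b c : ℤ} (hab : a ≤ b) (hbc : b ≤ c) : row a b ∪ row b c = row a c := by
  ext p
  simp only [Finset.mem_union, mem_row]
  omega

theorem disjoint_row (a b c : ℤ) : Disjoint (row a b) (row b c) := by
  rw [Finset.disjoint_left]
  intro p hp hp'
  rw [mem_row] at hp hp'
  omega

theorem row_eq_pair (a : ℤ) : row a (a + 2) = {(0, a), (0, a + 1)} := by
  ext p
  simp only [mem_row, Finset.mem_insert, Finset.mem_singleton, Prod.ext_iff]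
  omega

theorem row_eq_union_pair (a : ℤ) : row a (a + 3) = row a (a + 2) ∪ row (a + 1) (a + 3) := by
  ext p
  simp only [Finset.mem_union, mem_row]
  omega

theorem adj_row_succ (a : ℤ) : Adj (0, a) (0, a + 1) := by
  simp [Adj]

theorem connectedUnderAdj_row (a b : ℤ) : ConnectedUnderAdj ↑(row a b) := by
  set R := fun p q : Cell => p ∈ (row a b : Set Cell) ∧ q ∈ (row a b : Set Cell) ∧ Adj p q
  have : Std.Symm R := ⟨fun p q ⟨hp, hq, h⟩ => ⟨hq, hp, adj_comm.mp h⟩⟩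
  have forward : ∀ i, a ≤ i → ∀ j, i ≤ j → j < b → Relation.ReflTransGen R (0, i) (0, j) := by
    intro i hi j hij
    induction j, hij using Int.leInduction with
    | base => exact fun _ => .refl
    | succ j hij ih =>
      intro hj
      refine (ih (by omega)).tail ⟨?_, ?_, adj_row_succ j⟩ <;>
        simp only [Finset.mem_coe, mem_row, true_and] <;> omega
  rintro ⟨x, i⟩ hp ⟨y, j⟩ hq
  simp only [Finset.mem_coe, mem_row] at hp hq
  obtain ⟨rfl, hp⟩ := hp
  obtain ⟨rfl, hq⟩ := hq
  rcases le_total i j with h | h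
  · exact forward i hp.1 j h hq.2
  · exact Std.Symm.symm _ _ (forward j hq.1 i h hp.2)

theorem isFragment_row {a b : ℤ} (h2 : a + 2 ≤ b) (h3 : b ≤ a + 3) : IsFragment ↑(row a b) := by
  refine ⟨⟨(0, a + 1), ?_⟩, ?_, connectedUnderAdj_row a b⟩
  · rintro ⟨x, i⟩ hp
    simp only [Finset.mem_coe, mem_row] at hp
    obtain ⟨rfl, hp⟩ := hp
    have : i = a + 1 - 1 ∨ i = a + 1 ∨ i = a + 1 + 1 := by omega
    rcases this with rfl | rfl | rfl <;> simp [Xpent]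
  · rw [Set.ncard_coe_finset, card_row]
    omega

theorem IsFragment.ncard_le_three {F : Set Cell} {a : ℤ} (hF : IsFragment F)
    (hrow : ∀ p ∈ F, p.1 = a) : F.ncard ≤ 3 := by
  obtain ⟨⟨c, hc⟩, -, -⟩ := hF
  have hsub : F ⊆ ↑({(a, c.2 - 1), (a, c.2), (a, c.2 + 1)} : Finset Cell) := by
    intro p hp
    have hpa := hrow p hp
    have hpc := hc hp
    simp only [Xpent, Set.mem_insert_iff, Set.mem_singleton_iff, Prod.ext_iff] at hpc
    simp only [Finset.coe_insert, Finset.coe_singleton, Set.mem_insert_iff,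
      Set.mem_singleton_iff, Prod.ext_iff]
    omega
  exact (Set.ncard_le_ncard hsub (Finset.finite_toSet _)).trans
    ((Set.ncard_coe_finset _).trans_le Finset.card_le_three)

theorem IsFragmentTiling.subset {B F : Set Cell} {T : Finset (Set Cell)}
    (hT : IsFragmentTiling B T) (hF : F ∈ T) : F ⊆ B :=
  hT.2.2 ▸ Set.subset_biUnion_of_mem (u := id) (Finset.mem_coe.mpr hF)

theorem IsFragmentTiling.disjoint {B B' : Set Cell} {T T' : Finset (Set Cell)}
    (hT : IsFragmentTiling B T) (hT' : IsFragmentTiling B' T') (hB : Disjoint B B') :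
    Disjoint T T' := by
  rw [Finset.disjoint_left]
  intro F hF hF'
  have hempty : F = ∅ := Set.subset_empty_iff.mp <|
    hB (hT.subset hF) (hT'.subset hF')
  have := (hT.1 F hF).2.1
  simp [hempty] at this

theorem IsFragmentTiling.union [DecidableEq (Set Cell)] {B B' : Set Cell}
    {T T' : Finset (Set Cell)} (hT : IsFragmentTiling B T) (hT' : IsFragmentTiling B' T')
    (hB : Disjoint B B') : IsFragmentTiling (B ∪ B') (T ∪ T') := by
  refine ⟨fun F hF => ?_, fun F hF G hG hFG => ?_, ?_⟩
  · rcases Finset.mem_union.mp hF with hF | hF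
    exacts [hT.1 F hF, hT'.1 F hF]
  · rcases Finset.mem_union.mp hF with hF | hF <;> rcases Finset.mem_union.mp hG with hG | hG
    · exact hT.2.1 F hF G hG hFG
    · exact hB.mono (hT.subset hF) (hT'.subset hG)
    · exact hB.symm.mono (hT'.subset hF) (hT.subset hG)
    · exact hT'.2.1 F hF G hG hFG
  · rw [Finset.set_biUnion_union, hT.2.2, hT'.2.2]

theorem IsFragmentTiling.ncard_le_three_mul_card {B : Set Cell} {T : Finset (Set Cell)} {a : ℤ}
    (hT : IsFragmentTiling B T) (hrow : ∀ p ∈ B, p.1 = a) : B.ncard ≤ 3 * T.card :=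
  calc B.ncard = (⋃ F ∈ T, F).ncard := by rw [hT.2.2]
    _ ≤ ∑ F ∈ T, F.ncard := T.set_ncard_biUnion_le id
    _ ≤ ∑ _F ∈ T, 3 := Finset.sum_le_sum fun F hF =>
      (hT.1 F hF).ncard_le_three fun p hp => hrow p (hT.subset hF hp)
    _ = 3 * T.card := by rw [Finset.sum_const, smul_eq_mul, mul_comm]

theorem isFragmentTiling_singleton {F : Set Cell} (hF : IsFragment F) :
    IsFragmentTiling F {F} :=
  ⟨by simpa using hF, by simp, by simp⟩

theorem IsDomino.coe_subset {B : Set Cell} {e : Finset Cell} (he : IsDomino B e) : ↑e ⊆ B := by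
  obtain ⟨p, q, hp, hq, -, rfl⟩ := he
  simp [Set.insert_subset_iff, hp, hq]

theorem IsDomino.mono {B B' : Set Cell} {e : Finset Cell} (he : IsDomino B e) (h : B ⊆ B') :
    IsDomino B' e := by
  obtain ⟨p, q, hp, hq, hpq, rfl⟩ := he
  exact ⟨p, q, h hp, h hq, hpq, rfl⟩

theorem IsDomino.card_eq_two {B : Set Cell} {e : Finset Cell} (he : IsDomino B e) :
    e.card = 2 := by
  obtain ⟨p, q, -, -, hpq, rfl⟩ := he
  refine Finset.card_pair fun h => ?_
  simp [Adj, h] at hpq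

theorem IsDomino.eq_pair_of_mem {B : Set Cell} {e : Finset Cell} {a : ℤ} {c : Cell}
    (he : IsDomino B e) (hrow : ∀ p ∈ B, p.1 = a) (hc : c ∈ e) :
    e = {c, (c.1, c.2 + 1)} ∨ e = {c, (c.1, c.2 - 1)} := by
  obtain ⟨⟨x, i⟩, ⟨y, j⟩, hp, hq, hpq, rfl⟩ := he
  obtain rfl : x = a := hrow _ hp
  obtain rfl : y = x := hrow _ hq
  have hij : j = i + 1 ∨ i = j + 1 := by
    simp only [Adj, sub_self, abs_zero, zero_add] at hpq
    rcases abs_eq (zero_le_one' ℤ) |>.mp hpq with h | h <;> omega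
  rw [Finset.mem_insert, Finset.mem_singleton] at hc
  rcases hij with rfl | rfl <;> rcases hc with rfl | rfl
  · exact .inl rfl
  · exact .inr (by rw [Finset.pair_comm, add_sub_cancel_right])
  · exact .inr (by rw [add_sub_cancel_right])
  · exact .inl (by rw [Finset.pair_comm])

theorem isSaturatedCovering_iff {B : Set Cell} {D : Finset (Finset Cell)} :
    IsSaturatedCovering B D ↔
      IsDominoCovering B D ∧ ∀ e ∈ D, ∃ c ∈ e, ∀ e' ∈ D, c ∈ e' → e' = e := by
  refine and_congr_right fun hD => forall₂_congr fun e he => ?_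
  have hsub : (⋃ e' ∈ D.erase e, (↑e' : Set Cell)) ⊆ B :=
    hD.2 ▸ Set.biUnion_subset_biUnion_left (Finset.coe_subset.mpr (Finset.erase_subset e D))
  rw [Set.ssubset_iff_of_subset hsub, ← hD.2]
  simp only [Set.mem_iUnion₂, Finset.mem_erase, Finset.mem_coe, not_exists]
  constructor
  · rintro ⟨c, ⟨e'', he'', hce''⟩, hc⟩
    obtain rfl : e'' = e := by_contra fun h => hc e'' ⟨h, he''⟩ hce''
    exact ⟨c, hce'', fun e' he' hce' => by_contra fun h => hc e' ⟨h, he'⟩ hce'⟩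
  · rintro ⟨c, hce, hc⟩
    exact ⟨c, ⟨e, he, hce⟩, fun e' ⟨hne, he'⟩ hce' => hne (hc e' he' hce')⟩

theorem IsSaturatedCovering.union {B B' : Set Cell} {D D' : Finset (Finset Cell)}
    (hD : IsSaturatedCovering B D) (hD' : IsSaturatedCovering B' D') (hB : Disjoint B B') :
    IsSaturatedCovering (B ∪ B') (D ∪ D') := by
  rw [isSaturatedCovering_iff] at *
  obtain ⟨⟨hdom, huni⟩, hpriv⟩ := hD
  obtain ⟨⟨hdom', huni'⟩, hpriv'⟩ := hD'
  have hcross : ∀ e ∈ D, ∀ e' ∈ D', ∀ c ∈ e, c ∉ e' := fun e he e' he' c hce hce' =>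
    Set.disjoint_left.mp hB ((hdom e he).coe_subset hce) ((hdom' e' he').coe_subset hce')
  refine ⟨⟨fun e he => ?_, by rw [Finset.set_biUnion_union, huni, huni']⟩, fun e he => ?_⟩
  · rcases Finset.mem_union.mp he with he | he
    exacts [(hdom e he).mono Set.subset_union_left, (hdom' e he).mono Set.subset_union_right]
  · rcases Finset.mem_union.mp he with he | he
    · obtain ⟨c, hce, hc⟩ := hpriv e he
      refine ⟨c, hce, fun e' he' hce' => ?_⟩
      rcases Finset.mem_union.mp he' with he' | he'
      exacts [hc e' he' hce', (hcross e he e' he' c hce hce').elim]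
    · obtain ⟨c, hce, hc⟩ := hpriv' e he
      refine ⟨c, hce, fun e' he' hce' => ?_⟩
      rcases Finset.mem_union.mp he' with he' | he'
      exacts [(hcross e' he' e he c hce' hce).elim, hc e' he' hce']

theorem IsSaturatedCovering.disjoint {B B' : Set Cell} {D D' : Finset (Finset Cell)}
    (hD : IsSaturatedCovering B D) (hD' : IsSaturatedCovering B' D') (hB : Disjoint B B') :
    Disjoint D D' := by
  rw [Finset.disjoint_left]
  intro e he he'
  obtain ⟨c, hc⟩ := Finset.card_pos.mp (((hD.1.1 e he).card_eq_two).symm ▸ two_pos)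
  exact Set.disjoint_left.mp hB ((hD.1.1 e he).coe_subset hc) ((hD'.1.1 e he').coe_subset hc)

open Finset in
theorem add_one_mul_card_le_of_exists_private {α : Type*} [DecidableEq α]
    {D : Finset (Finset α)} {U : Finset α} {Δ : ℕ} (htwo : ∀ e ∈ D, e.card = 2)
    (hsub : ∀ e ∈ D, e ⊆ U) (hdeg : ∀ c ∈ U, #{e ∈ D | c ∈ e} ≤ Δ)
    (hpriv : ∀ e ∈ D, ∃ c ∈ e, ∀ e' ∈ D, c ∈ e' → e' = e) :
    (Δ + 1) * D.card ≤ Δ * U.card := by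
  obtain rfl | ⟨e₀, he₀⟩ := D.eq_empty_or_nonempty
  · simp
  have : Nonempty α := ⟨(card_pos.mp (htwo e₀ he₀ ▸ two_pos)).choose⟩
  choose! p hpe hp using hpriv
  set P := D.image p
  have hcardP : P.card = D.card :=
    card_image_of_injOn fun e he e' he' h => hp e' he' e he (h ▸ hpe e he)
  have hPU : P ⊆ U := image_subset_iff.mpr fun e he => hsub e he (hpe e he)
  have hdegP : ∀ c ∈ P, #{e ∈ D | c ∈ e} = 1 := by
    simp only [P, mem_image, forall_exists_index, and_imp, forall_apply_eq_imp_iff₂]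
    intro e he
    rw [card_eq_one]
    exact ⟨e, eq_singleton_iff_unique_mem.mpr
      ⟨mem_filter.mpr ⟨he, hpe e he⟩, fun e' he' => hp e he e' (mem_filter.mp he').1
        (mem_filter.mp he').2⟩⟩
  have hdouble : ∑ c ∈ U, #{e ∈ D | c ∈ e} = 2 * D.card := by
    have := sum_card_bipartiteAbove_eq_sum_card_bipartiteBelow (r := (· ∈ ·)) (s := U) (t := D)
    simp only [bipartiteAbove, bipartiteBelow] at this
    rw [this, sum_congr rfl fun e he => by rw [filter_mem_eq_inter,
      inter_eq_right.mpr (hsub e he), htwo e he], sum_const, smul_eq_mul, mul_comm]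
  have hbound : 2 * D.card ≤ D.card + (U.card - D.card) * Δ := by
    rw [← hdouble, ← sum_sdiff hPU, add_comm, sum_congr rfl hdegP, sum_const,
      smul_eq_mul, mul_one, hcardP, ← hcardP, ← card_sdiff_of_subset hPU]
    gcongr
    exact sum_le_card_nsmul _ _ _ fun c hc => hdeg c (sdiff_subset hc)
  have hDU : D.card ≤ U.card := hcardP ▸ card_le_card hPU
  nlinarith [Nat.sub_add_cancel hDU]

open Finset in
theorem card_filter_mem_le_two_of_row {B : Set Cell} {D : Finset (Finset Cell)} {a : ℤ}
    (hD : ∀ e ∈ D, IsDomino B e) (hrow : ∀ p ∈ B, p.1 = a) (c : Cell) :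
    #{e ∈ D | c ∈ e} ≤ 2 := by
  refine (card_le_card fun e he => ?_).trans
    (card_le_two (a := {c, (c.1, c.2 + 1)}) (b := {c, (c.1, c.2 - 1)}))
  obtain ⟨he, hce⟩ := mem_filter.mp he
  simpa only [mem_insert, mem_singleton] using (hD e he).eq_pair_of_mem hrow hce

theorem IsSaturatedCovering.three_mul_card_le {U : Finset Cell} {D : Finset (Finset Cell)}
    {a : ℤ} (hD : IsSaturatedCovering ↑U D) (hrow : ∀ p ∈ U, p.1 = a) :
    3 * D.card ≤ 2 * U.card :=
  add_one_mul_card_le_of_exists_private (fun e he => (hD.1.1 e he).card_eq_two)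
    (fun e he => Finset.coe_subset.mp (hD.1.1 e he).coe_subset)
    (fun c _ => card_filter_mem_le_two_of_row hD.1.1 hrow c) (isSaturatedCovering_iff.mp hD).2

theorem isDomino_row {B : Set Cell} {a b : ℤ} (hb : b = a + 2) (h : ↑(row a b) ⊆ B) :
    IsDomino B (row a b) := by
  subst hb
  exact ⟨(0, a), (0, a + 1), h (by simp [mem_row]), h (by simp [mem_row]), adj_row_succ a,
    row_eq_pair a⟩

theorem isSaturatedCovering_row_two (a : ℤ) :
    IsSaturatedCovering ↑(row a (a + 2)) {row a (a + 2)} := by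
  refine isSaturatedCovering_iff.mpr ⟨⟨?_, by simp⟩, ?_⟩ <;>
    simp only [Finset.mem_singleton, forall_eq]
  · exact isDomino_row rfl subset_rfl
  · exact ⟨(0, a), by simp [mem_row], fun _ => trivial⟩

theorem isSaturatedCovering_row_three (a : ℤ) :
    IsSaturatedCovering ↑(row a (a + 3)) {row a (a + 2), row (a + 1) (a + 3)} := by
  rw [isSaturatedCovering_iff]
  refine ⟨⟨?_, by simp [row_eq_union_pair]⟩, ?_⟩ <;>
    simp only [Finset.mem_insert, Finset.mem_singleton, forall_eq_or_imp, forall_eq]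
  · rw [row_eq_union_pair, Finset.coe_union]
    exact ⟨isDomino_row rfl Set.subset_union_left, isDomino_row (by ring) Set.subset_union_right⟩
  · refine ⟨⟨(0, a), by simp [mem_row], ?_, ?_⟩, ⟨(0, a + 2), by simp [mem_row], ?_, ?_⟩⟩ <;>
      simp [mem_row]

-- A partition of a row of length `n ≥ 2` into `⌈n/3⌉` blocks of lengths `2` and `3`.
theorem row_induction {P : ℤ → ℕ → ℕ → Prop} (two : ∀ a, P a 2 1) (three : ∀ a, P a 3 1)
    (append : ∀ a m m' k k', P a m k → P (a + m) m' k' → P a (m + m') (k + k')) :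
    ∀ n, 2 ≤ n → ∀ a, P a n ((n + 2) / 3) := by
  intro n
  induction n using Nat.strong_induction_on with
  | _ n ih =>
    intro hn a
    match n, hn with
    | 2, _ => exact two a
    | 3, _ => exact three a
    | 4, _ => exact append a 2 2 1 1 (two a) (two _)
    | m + 5, _ =>
      have hk : (m + 5 + 2) / 3 = (m + 2 + 2) / 3 + 1 := by omega
      rw [hk]
      exact append a (m + 2) 3 _ 1 (ih (m + 2) (by omega) (by omega) a) (three _)

theorem coe_row_add (a : ℤ) (m m' : ℕ) :
    (↑(row a (a + ↑(m + m'))) : Set Cell) = ↑(row a (a + m)) ∪ ↑(row (a + m) (a + m + m')) := by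
  rw [← Finset.coe_union, row_union (by omega) (by omega), Nat.cast_add, add_assoc]

theorem disjoint_coe_row (a b c : ℤ) : Disjoint (↑(row a b) : Set Cell) ↑(row b c) :=
  Finset.disjoint_coe.mpr (disjoint_row a b c)

theorem exists_isFragmentTiling_row {n : ℕ} (hn : 2 ≤ n) (a : ℤ) :
    ∃ T : Finset (Set Cell), IsFragmentTiling ↑(row a (a + n)) T ∧ T.card = (n + 2) / 3 := by
  classical
  refine row_induction (P := fun a n k => ∃ T : Finset (Set Cell),
    IsFragmentTiling ↑(row a (a + n)) T ∧ T.card = k) ?_ ?_ ?_ n hn a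
  · exact fun a => ⟨_, isFragmentTiling_singleton (isFragment_row (by simp) (by simp)), rfl⟩
  · exact fun a => ⟨_, isFragmentTiling_singleton (isFragment_row (by simp) (by simp)), rfl⟩
  · rintro a m m' _ _ ⟨T, hT, rfl⟩ ⟨T', hT', rfl⟩
    have hdisj := disjoint_coe_row a (a + m) (a + m + m')
    rw [coe_row_add]
    exact ⟨T ∪ T', hT.union hT' hdisj, Finset.card_union_of_disjoint (hT.disjoint hT' hdisj)⟩

theorem exists_isSaturatedCovering_row {n : ℕ} (hn : 2 ≤ n) (a : ℤ) :
    ∃ D : Finset (Finset Cell), IsSaturatedCovering ↑(row a (a + n)) D ∧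
      D.card + (n + 2) / 3 = n := by
  refine row_induction (P := fun a n k => ∃ D : Finset (Finset Cell),
    IsSaturatedCovering ↑(row a (a + n)) D ∧ D.card + k = n) ?_ ?_ ?_ n hn a
  · exact fun a => ⟨_, isSaturatedCovering_row_two a, rfl⟩
  · exact fun a => ⟨_, isSaturatedCovering_row_three a, by
      have hmem : ((0 : ℤ), a) ∈ row a (a + 2) := by simp [mem_row]
      rw [Finset.card_pair fun h => by simp [h, mem_row] at hmem]⟩
  · rintro a m m' k k' ⟨D, hD, hDk⟩ ⟨D', hD', hDk'⟩
    have hdisj := disjoint_coe_row a (a + m) (a + m + m')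
    rw [coe_row_add]
    refine ⟨D ∪ D', hD.union hD' hdisj, ?_⟩
    rw [Finset.card_union_of_disjoint (hD.disjoint hD' hdisj)]
    omega

theorem fNum_rect_one {n : ℕ} (hn : 2 ≤ n) : fNum (Rect 1 n) = (n + 2) / 3 := by
  obtain ⟨T, hT, hcard⟩ := exists_isFragmentTiling_row hn 0
  rw [zero_add, ← rect_one_eq_row] at hT
  refine le_antisymm (Nat.sInf_le ⟨T, hT, hcard⟩) (le_csInf ⟨_, T, hT, hcard⟩ ?_)
  rintro k ⟨T', hT', rfl⟩
  rw [rect_one_eq_row] at hT'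
  have := hT'.ncard_le_three_mul_card fun p hp => (mem_row.mp hp).1
  rw [Set.ncard_coe_finset, card_row] at this
  omega

theorem dNum_rect_one {n : ℕ} (hn : 2 ≤ n) : dNum (Rect 1 n) = n - (n + 2) / 3 := by
  obtain ⟨D, hD, hcard⟩ := exists_isSaturatedCovering_row hn 0
  rw [zero_add, ← rect_one_eq_row] at hD
  have hbound : ∀ k ∈ {k : ℕ | ∃ D : Finset (Finset Cell),
      IsSaturatedCovering (Rect 1 n) D ∧ D.card = k}, k ≤ n - (n + 2) / 3 := by
    rintro k ⟨D', hD', rfl⟩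
    rw [rect_one_eq_row] at hD'
    have := hD'.three_mul_card_le fun p hp => (mem_row.mp hp).1
    rw [card_row] at this
    omega
  exact le_antisymm (csSup_le ⟨_, D, hD, rfl⟩ hbound) (le_csSup ⟨_, hbound⟩ ⟨D, hD, by omega⟩)

/-- For `n ≥ 2`, `f(R₁ₙ) = ⌈n/3⌉` and `d(R₁ₙ) = n − ⌈n/3⌉`. -/
theorem fNum_dNum_one_by_n (n : ℕ) (hn : 2 ≤ n) :
    (fNum (Rect 1 n) : ℤ) = ⌈(n : ℚ) / 3⌉ ∧
    (dNum (Rect 1 n) : ℤ) = (n : ℤ) - ⌈(n : ℚ) / 3⌉ := by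
  have hceil : ⌈(n : ℚ) / 3⌉ = ((n + 2) / 3 : ℕ) := by
    have := Rat.ceil_natCast_div_natCast n 3
    push_cast at this
    omega
  rw [fNum_rect_one hn, dNum_rect_one hn, hceil]
  omega
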